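/- Let M be a positive integer, m > 0, a ≥ 0, and b ≥ 0. Let G be a random variable with the Gamma(m, 1/m) density m^{m} x^{m−1} e^{−m x}/Γ(m) on (0, ∞). Then 𝔼[ 1 − (1 − exp(−(a G + b)))^{M} ] = Σ_{k=1}^{M} C(M, k) (−1)^{k+1} e^{−k b} (1 + k a/m)^{−m}, where C(M, k) is the binomial coefficient. -/

import Mathlib

/-!
Expanding `1 - (1 - e^{-(aG+b)})^M` by the binomial theorem turns the expectation into a finite
combination of values `𝔼[e^{-k a G}]` of the Laplace transform of the Gamma law, and the Laplace
transform of `Gamma(shape a, rate r)` at `c` is `(1 + c / r)^{-a}`, read off from the Gamma integral.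
-/

open MeasureTheory ProbabilityTheory Real

theorem one_sub_one_sub_pow {R : Type*} [CommRing R] (M : ℕ) (t : R) :
    1 - (1 - t) ^ M = ∑ k ∈ Finset.Icc 1 M, (M.choose k : R) * (-1) ^ (k + 1) * t ^ k := by
  rw [sub_eq_neg_add 1 t, add_pow, Finset.range_eq_Ico, Finset.sum_eq_sum_Ico_succ_bot M.succ_pos,
    zero_add, Nat.succ_eq_add_one, Finset.Ico_add_one_right_eq_Icc, sub_add_eq_sub_sub]
  simp only [pow_zero, one_pow, mul_one, Nat.choose_zero_right, Nat.cast_one, sub_self, zero_sub,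
    ← Finset.sum_neg_distrib, neg_pow t, pow_succ]
  exact Finset.sum_congr rfl fun k _ => by ring

namespace ProbabilityTheory

theorem integral_exp_neg_mul_gammaMeasure {a r c : ℝ} (ha : 0 < a) (hr : 0 < r) (hc : -r < c) :
    ∫ x, exp (-(c * x)) ∂gammaMeasure a r = (1 + c / r) ^ (-a) := by
  have hrc : 0 < r + c := by linarith
  have hdensity : ∀ x, (gammaPDF a r x).toReal = gammaPDFReal a r x := fun x =>
    ENNReal.toReal_ofReal (gammaPDFReal_nonneg ha hr x)
  have hsupport : ∀ x ∉ Set.Ici (0 : ℝ), gammaPDFReal a r x * exp (-(c * x)) = 0 := fun x hx => by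
    rw [gammaPDFReal, if_neg (Set.notMem_Ici.mp hx).not_ge, zero_mul]
  have hkernel : ∀ x ∈ Set.Ioi (0 : ℝ), gammaPDFReal a r x * exp (-(c * x))
      = r ^ a / Gamma a * (x ^ (a - 1) * exp (-((r + c) * x))) := fun x hx => by
    rw [gammaPDFReal, if_pos (le_of_lt hx), mul_assoc, mul_assoc, ← exp_add]
    ring_nf
  rw [gammaMeasure, _root_.integral_withDensity_eq_integral_toReal_smul
    (f := gammaPDF a r) (measurable_gammaPDFReal a r).ennreal_ofReal
    (ae_of_all _ fun _ => ENNReal.ofReal_lt_top)]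
  simp only [hdensity, smul_eq_mul]
  rw [← setIntegral_eq_integral_of_forall_compl_eq_zero hsupport, integral_Ici_eq_integral_Ioi,
    setIntegral_congr_fun measurableSet_Ioi hkernel, integral_const_mul,
    integral_rpow_mul_exp_neg_mul_Ioi ha hrc]
  have hratio : 1 + c / r = (r + c) / r := by field_simp
  rw [hratio, rpow_neg (div_pos hrc hr).le, ← inv_rpow (div_pos hrc hr).le, inv_div,
    div_rpow hr.le hrc.le, one_div, inv_rpow hrc.le]
  field_simp

-- The integral is positive, so it is not the junk value of a non-integrable function.
theorem integrable_exp_neg_mul_gammaMeasure {a r c : ℝ} (ha : 0 < a) (hr : 0 < r) (hc : -r < c) :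
    Integrable (fun x => exp (-(c * x))) (gammaMeasure a r) := by
  refine Integrable.of_integral_ne_zero ?_
  rw [integral_exp_neg_mul_gammaMeasure ha hr hc]
  have : 0 < 1 + c / r := by rw [← div_self hr.ne', ← add_div]; apply div_pos <;> linarith
  positivity

end ProbabilityTheory

theorem stmt_8_general (M : ℕ) (m a b : ℝ) (hm : 0 < m) (ha : 0 ≤ a)
    {Ω : Type*} [MeasurableSpace Ω] (P : Measure Ω)
    (G : Ω → ℝ) (hG : Measurable G)
    (hlaw : Measure.map G P = ProbabilityTheory.gammaMeasure m m) :
    ∫ ω, (1 - (1 - Real.exp (-(a * G ω + b))) ^ M) ∂P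
      = ∑ k ∈ Finset.Icc 1 M,
          (M.choose k : ℝ) * (-1 : ℝ) ^ (k + 1) * Real.exp (-(k : ℝ) * b) *
            (1 + (k : ℝ) * a / m) ^ (-m) := by
  have hrate : ∀ k : ℕ, -m < k * a := fun k => by
    have := mul_nonneg k.cast_nonneg ha
    linarith
  have hpow : ∀ (k : ℕ) (x : ℝ),
      exp (-(a * x + b)) ^ k = exp (-(k : ℝ) * b) * exp (-(k * a * x)) := fun k x => by
    rw [← exp_nat_mul, ← exp_add]
    ring_nf
  rw [← integral_map (f := fun x => 1 - (1 - exp (-(a * x + b))) ^ M) hG.aemeasurable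
    (by fun_prop), hlaw]
  simp_rw [one_sub_one_sub_pow, hpow, ← mul_assoc]
  rw [integral_finsetSum _ fun k _ =>
    (integrable_exp_neg_mul_gammaMeasure hm hm (hrate k)).const_mul _]
  refine Finset.sum_congr rfl fun k _ => ?_
  rw [integral_const_mul, integral_exp_neg_mul_gammaMeasure hm hm (hrate k)]

/-- Core computation in the proof of Lemma 5: for a positive integer `M`, `m > 0`,
`a ≥ 0`, `b ≥ 0`, and `G` a Gamma(m, 1/m)-distributed random variable (density
`m^m x^(m−1) e^(−m x)/Γ(m)` on `(0, ∞)`, i.e. rate `m`),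
`𝔼[1 − (1 − e^(−(aG+b)))^M] = Σ_{k=1}^{M} C(M,k) (−1)^(k+1) e^(−kb) (1 + ka/m)^(−m)`. -/
theorem stmt_8 (M : ℕ) (hM : 0 < M) (m a b : ℝ) (hm : 0 < m) (ha : 0 ≤ a) (hb : 0 ≤ b)
    {Ω : Type*} [MeasurableSpace Ω] (P : Measure Ω) [IsProbabilityMeasure P]
    (G : Ω → ℝ) (hG : Measurable G)
    (hlaw : Measure.map G P = ProbabilityTheory.gammaMeasure m m) :
    ∫ ω, (1 - (1 - Real.exp (-(a * G ω + b))) ^ M) ∂P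
      = ∑ k ∈ Finset.Icc 1 M,
          (M.choose k : ℝ) * (-1 : ℝ) ^ (k + 1) * Real.exp (-(k : ℝ) * b) *
            (1 + (k : ℝ) * a / m) ^ (-m) :=
  stmt_8_general M m a b hm ha P G hG hlaw
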